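/- Assume k has characteristic 0. Let a, b ∈ C projectively centralize x, i.e. c_{a,x} ∘ c_{x,a} = λ_a · id_{x⊗a} and c_{b,x} ∘ c_{x,b} = λ_b · id_{x⊗b} for scalars λ_a, λ_b ∈ k^×. If the Q_{Dx}-modules (a, f) and (b, g) both satisfy the relation φ, i.e. φ(f) := f^{∗2} ∘ (φ ⊗ id_a) = 0 and φ(g) = 0, then their fusion product (a ⊗ b, f ⊗̂ g) satisfies the relation φ: φ(f ⊗̂ g) = 0. Moreover, if a projectively centralizes x and (m, h) is any Q_{Dx}-module satisfying the relation φ, then (a ⊗ m, f ⊗̂ h) satisfies the relation φ. -/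

import Mathlib

/-!
Write `u₁ : x ⊗ n ⟶ n` and `u₂ : x^∗ ⊗ n ⟶ n` for the components of a `Q_{Dx}`-module `(n, u)`.
Then `φ(u)` is the difference of `coev` fed through `(u₁, u₂)` and of `c_{x,x^∗} ∘ coev` fed
through `(u₂, u₁)`. Each component of `f ⊗̂ h` is a part acting on `a` plus a part acting on `m`
after braiding past `a`, so `φ(f ⊗̂ h)` splits into three kinds of terms. Those acting only on `a`
give `φ(f) ⊗ id_m`; the mixed ones cancel in pairs by naturality of the braiding and the hexagon
axioms; those acting only on `m` give `λ_a · id_a ⊗ φ(h)`, because `c_{a,x^∗}⁻¹ = λ_a · c_{x^∗,a}`.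
That last identity holds since the monodromy of `a` around `x ⊗ x^∗` is trivial on the image of
`coev`, and duality turns `λ_a · (monodromy of x^∗ around a) = id` on that image into an identity
on `x^∗ ⊗ a`. Hence `φ(f ⊗̂ h) = φ(f) ⊗ id_m + λ_a · id_a ⊗ φ(h)`.
-/

open CategoryTheory MonoidalCategory

universe v u

variable {k : Type*} [Field k]
variable {C : Type u} [Category.{v} C] [MonoidalCategory C] [BraidedCategory C]
  [Preadditive C] [CategoryTheory.Linear k C] [MonoidalPreadditive C] [MonoidalLinear k C]

/-- The fusion product `f ⊗̂ g` of two modules over the Drinfeld quiver `Q_z` of an object `z`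
of the Drinfeld center. -/
noncomputable def fus (z : CategoryTheory.Center C) {a b : C}
    (f : z.1 ⊗ a ⟶ a) (g : z.1 ⊗ b ⟶ b) : z.1 ⊗ (a ⊗ b) ⟶ a ⊗ b :=
  (α_ z.1 a b).inv ≫ (f ▷ b)
    + (α_ z.1 a b).inv ≫ ((z.2.β a).hom ▷ b) ≫ (α_ a z.1 b).hom ≫ (a ◁ g)

/-- The morphism `φ(f) = f^{∗2} ∘ (φ ⊗ id_a)` for a morphism `φ : 𝟙_C ⟶ z ⊗ z` and a module
`(a, f)` over `Q_z`; the module satisfies the relation `φ` iff `φ(f) = 0`. -/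
noncomputable def relTwo (z : CategoryTheory.Center C) (φ : 𝟙_ C ⟶ z.1 ⊗ z.1)
    {a : C} (f : z.1 ⊗ a ⟶ a) : (𝟙_ C) ⊗ a ⟶ a :=
  (φ ▷ a) ≫ (α_ z.1 z.1 a).hom ≫ (z.1 ◁ f) ≫ f

open BraidedCategory

section CopairAct

variable {V : Type*} [Category V] [MonoidalCategory V]

-- `relTwo z φ f` is `copairAct φ f f`.
noncomputable def copairAct {y₁ y₂ n : V} (ψ : 𝟙_ V ⟶ y₁ ⊗ y₂) (w : y₁ ⊗ n ⟶ n)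
    (v : y₂ ⊗ n ⟶ n) : 𝟙_ V ⊗ n ⟶ n :=
  (ψ ▷ n) ≫ (α_ y₁ y₂ n).hom ≫ (y₁ ◁ v) ≫ w

-- `fus z f g` is `actLeft f b + actRight (z.2.β a).hom g`.
noncomputable def actLeft {y a : V} (F : y ⊗ a ⟶ a) (m : V) : y ⊗ (a ⊗ m) ⟶ a ⊗ m :=
  (α_ y a m).inv ≫ (F ▷ m)

noncomputable def actRight {y a m : V} (σ : y ⊗ a ⟶ a ⊗ y) (H : y ⊗ m ⟶ m) :
    y ⊗ (a ⊗ m) ⟶ a ⊗ m :=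
  (α_ y a m).inv ≫ (σ ▷ m) ≫ (α_ a y m).hom ≫ (a ◁ H)

theorem whiskerRight_comp_actLeft {y y' a : V} (j : y' ⟶ y) (F : y ⊗ a ⟶ a) (m : V) :
    (j ▷ (a ⊗ m)) ≫ actLeft F m = actLeft ((j ▷ a) ≫ F) m := by
  simp [actLeft]

theorem whiskerRight_comp_actRight {y y' a m : V} (j : y' ⟶ y) {σ : y ⊗ a ⟶ a ⊗ y}
    {σ' : y' ⊗ a ⟶ a ⊗ y'} (hσ : (j ▷ a) ≫ σ = σ' ≫ (a ◁ j)) (H : y ⊗ m ⟶ m) :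
    (j ▷ (a ⊗ m)) ≫ actRight σ H = actRight σ' ((j ▷ m) ≫ H) := by
  simp only [actRight, associator_inv_naturality_left_assoc, ← comp_whiskerRight_assoc, hσ]
  simp

theorem copairAct_comp_tensorHom {y₁ y₂ z₁ z₂ n : V} (ψ : 𝟙_ V ⟶ y₁ ⊗ y₂) (j₁ : y₁ ⟶ z₁)
    (j₂ : y₂ ⟶ z₂) (w : z₁ ⊗ n ⟶ n) (v : z₂ ⊗ n ⟶ n) :
    copairAct (ψ ≫ (j₁ ⊗ₘ j₂)) w v = copairAct ψ ((j₁ ▷ n) ≫ w) ((j₂ ▷ n) ≫ v) := by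
  simp only [copairAct, MonoidalCategory.tensorHom_def, comp_whiskerRight, Category.assoc,
    associator_naturality_middle_assoc, associator_naturality_left_assoc,
    MonoidalCategory.whiskerLeft_comp, whisker_exchange_assoc]

theorem copairAct_actLeft_actLeft {y₁ y₂ a : V} (ψ : 𝟙_ V ⟶ y₁ ⊗ y₂) (F : y₁ ⊗ a ⟶ a)
    (F' : y₂ ⊗ a ⟶ a) (m : V) :
    copairAct ψ (actLeft F m) (actLeft F' m) = (α_ (𝟙_ V) a m).inv ≫ (copairAct ψ F F' ▷ m) := by
  simp only [copairAct, actLeft]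
  monoidal

variable [BraidedCategory V]

theorem copairAct_actRight_actLeft {y₁ y₂ a m : V} (ψ : 𝟙_ V ⟶ y₁ ⊗ y₂) (F : y₂ ⊗ a ⟶ a)
    (H : y₁ ⊗ m ⟶ m) :
    copairAct ψ (actRight (β_ y₁ a).hom H) (actLeft F m) =
      copairAct (ψ ≫ (β_ y₁ y₂).hom) (actLeft F m) (actRight (β_ y₁ a).hom H) := by
  calc _ = (α_ (𝟙_ V) a m).inv ≫ ((ψ ▷ a ≫ (α_ y₁ y₂ a).hom ≫ (y₁ ◁ F) ≫ (β_ y₁ a).hom) ▷ m) ≫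
        (α_ a y₁ m).hom ≫ (a ◁ H) := by
        simp only [copairAct, actLeft, actRight, comp_whiskerRight]; monoidal
    _ = (α_ (𝟙_ V) a m).inv ≫ (((ψ ≫ (β_ y₁ y₂).hom) ▷ a ≫ (α_ y₂ y₁ a).hom ≫
        (y₂ ◁ (β_ y₁ a).hom) ≫ (α_ y₂ a y₁).inv) ▷ m) ≫ ((F ▷ y₁) ▷ m) ≫
        (α_ a y₁ m).hom ≫ (a ◁ H) := by
        rw [braiding_naturality_right, braiding_tensor_right_hom]
        simp only [comp_whiskerRight, Category.assoc]; monoidal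
    _ = _ := by
        rw [associator_naturality_left_assoc, ← whisker_exchange]
        simp only [copairAct, actLeft, actRight, comp_whiskerRight]; monoidal

theorem copairAct_actLeft_actRight {y₁ y₂ a m : V} (ψ : 𝟙_ V ⟶ y₁ ⊗ y₂) (F : y₁ ⊗ a ⟶ a)
    (H : y₂ ⊗ m ⟶ m) :
    copairAct ψ (actLeft F m) (actRight (β_ a y₂).inv H) =
      copairAct (ψ ≫ (β_ y₁ y₂).hom) (actRight (β_ a y₂).inv H) (actLeft F m) := by
  calc _ = (α_ (𝟙_ V) a m).inv ≫ ((ψ ▷ a ≫ (α_ y₁ y₂ a).hom ≫ (y₁ ◁ (β_ a y₂).inv) ≫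
        (α_ y₁ a y₂).inv) ▷ m) ≫ ((F ▷ y₂) ▷ m) ≫ (α_ a y₂ m).hom ≫ (a ◁ H) := by
        rw [associator_naturality_left_assoc, ← whisker_exchange]
        simp only [copairAct, actLeft, actRight, comp_whiskerRight]; monoidal
    _ = (α_ (𝟙_ V) a m).inv ≫ (((ψ ≫ (β_ y₁ y₂).hom) ▷ a ≫ (α_ y₂ y₁ a).hom ≫ (y₂ ◁ F) ≫
        (β_ a y₂).inv) ▷ m) ≫ (α_ a y₂ m).hom ≫ (a ◁ H) := by
        rw [braiding_inv_naturality_right, braiding_tensor_left_inv]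
        simp
    _ = _ := by
        simp only [copairAct, actLeft, actRight, comp_whiskerRight]; monoidal

theorem copairAct_actRight_actRight {y₁ y₂ a m : V} (ψ : 𝟙_ V ⟶ y₁ ⊗ y₂) (H : y₁ ⊗ m ⟶ m)
    (H' : y₂ ⊗ m ⟶ m) :
    copairAct ψ (actRight (β_ y₁ a).hom H) (actRight (β_ y₂ a).hom H') =
      (λ_ (a ⊗ m)).hom ≫ (a ◁ (λ_ m).inv) ≫ (a ◁ copairAct ψ H H') := by
  calc _ = (α_ (𝟙_ V) a m).inv ≫ ((ψ ▷ a ≫ (β_ (y₁ ⊗ y₂) a).hom) ▷ m) ≫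
        (α_ a (y₁ ⊗ y₂) m).hom ≫ (a ◁ ((α_ y₁ y₂ m).hom ≫ (y₁ ◁ H') ≫ H)) := by
        simp only [copairAct, actRight, MonoidalCategory.whiskerLeft_comp, Category.assoc]
        rw [associator_inv_naturality_right_assoc, whisker_exchange_assoc,
          associator_naturality_right_assoc, braiding_tensor_left_hom]
        simp only [comp_whiskerRight, Category.assoc]
        monoidal
    _ = _ := by
        rw [braiding_naturality_left, braiding_tensorUnit_left]
        simp only [copairAct, comp_whiskerRight, MonoidalCategory.whiskerLeft_comp, Category.assoc]
        monoidal

-- The left side is `ψ ▷ a ≫ (β_ (y₁ ⊗ y₂) a).hom ≫ (β_ a (y₁ ⊗ y₂)).hom ≫ α`, expanded by the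
-- hexagon axioms.
theorem whiskerRight_comp_monodromy {y₁ y₂ : V} (ψ : 𝟙_ V ⟶ y₁ ⊗ y₂) (a : V) :
    (ψ ▷ a) ≫ (α_ y₁ y₂ a).hom ≫ (y₁ ◁ (β_ y₂ a).hom) ≫ (α_ y₁ a y₂).inv ≫
      (((β_ y₁ a).hom ≫ (β_ a y₁).hom) ▷ y₂) ≫ (α_ y₁ a y₂).hom ≫ (y₁ ◁ (β_ a y₂).hom) =
      (ψ ▷ a) ≫ (α_ y₁ y₂ a).hom := by
  have h : (ψ ▷ a) ≫ (β_ (y₁ ⊗ y₂) a).hom ≫ (β_ a (y₁ ⊗ y₂)).hom = ψ ▷ a := by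
    rw [braiding_naturality_left_assoc, braiding_naturality_right, braiding_tensorUnit_left_assoc,
      braiding_tensorUnit_right_assoc]
    simp
  rw [braiding_tensor_left_hom, braiding_tensor_right_hom] at h
  rw [← cancel_mono (α_ y₁ y₂ a).inv]
  simpa using h

end CopairAct

section Preadditive

variable {V : Type*} [Category V] [MonoidalCategory V] [Preadditive V]
  {R : Type*} [Semiring R] [Linear R V]

theorem copairAct_smul_outer {y₁ y₂ n : V} (ψ : 𝟙_ V ⟶ y₁ ⊗ y₂) (c : R) (w : y₁ ⊗ n ⟶ n)
    (v : y₂ ⊗ n ⟶ n) : copairAct ψ (c • w) v = c • copairAct ψ w v := by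
  simp [copairAct]

variable [MonoidalPreadditive V]

theorem sub_whiskerRight {X Y : V} (f g : X ⟶ Y) (Z : V) : (f - g) ▷ Z = f ▷ Z - g ▷ Z :=
  (tensorRight Z).map_sub

theorem whiskerLeft_sub (X : V) {Y Z : V} (f g : Y ⟶ Z) : X ◁ (f - g) = X ◁ f - X ◁ g :=
  (tensorLeft X).map_sub

theorem copairAct_sub {y₁ y₂ n : V} (ψ ψ' : 𝟙_ V ⟶ y₁ ⊗ y₂) (w : y₁ ⊗ n ⟶ n)
    (v : y₂ ⊗ n ⟶ n) : copairAct (ψ - ψ') w v = copairAct ψ w v - copairAct ψ' w v := by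
  simp [copairAct, sub_whiskerRight]

theorem copairAct_add_add {y₁ y₂ n : V} (ψ : 𝟙_ V ⟶ y₁ ⊗ y₂) (w w' : y₁ ⊗ n ⟶ n)
    (v v' : y₂ ⊗ n ⟶ n) :
    copairAct ψ (w + w') (v + v') =
      copairAct ψ w v + copairAct ψ w v' + copairAct ψ w' v + copairAct ψ w' v' := by
  simp only [copairAct, MonoidalPreadditive.whiskerLeft_add, Preadditive.add_comp,
    Preadditive.comp_add]
  abel

variable [MonoidalLinear R V]

theorem copairAct_smul_inner {y₁ y₂ n : V} (ψ : 𝟙_ V ⟶ y₁ ⊗ y₂) (w : y₁ ⊗ n ⟶ n) (c : R)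
    (v : y₂ ⊗ n ⟶ n) : copairAct ψ w (c • v) = c • copairAct ψ w v := by
  simp [copairAct]

theorem actRight_smul {y a m : V} (c : R) (σ : y ⊗ a ⟶ a ⊗ y) (H : y ⊗ m ⟶ m) :
    actRight (c • σ) H = c • actRight σ H := by
  simp [actRight]

end Preadditive

theorem braiding_inv_eq_smul_braiding_of_exactPairing {x xS a : C} [ExactPairing x xS] {c : k}
    (hxa : (β_ x a).hom ≫ (β_ a x).hom = c • 𝟙 (x ⊗ a)) :
    (β_ a xS).inv = c • (β_ xS a).hom := by
  have hmono : c • ((β_ xS a).hom ≫ (β_ a xS).hom) = 𝟙 _ := by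
    apply (tensorLeftHomEquiv a x xS (xS ⊗ a)).injective
    have h := whiskerRight_comp_monodromy (η_ x xS) a
    rw [hxa] at h
    simp only [MonoidalLinear.smul_whiskerRight, id_whiskerRight, Linear.smul_comp,
      Linear.comp_smul, Category.id_comp, Iso.inv_hom_id_assoc] at h
    simp [tensorLeftHomEquiv, h]
  calc (β_ a xS).inv = (c • ((β_ xS a).hom ≫ (β_ a xS).hom)) ≫ (β_ a xS).inv := by
        rw [hmono, Category.id_comp]
    _ = c • (β_ xS a).hom := by simp

theorem relTwo_eq_copairAct_sub {x xS : C} (coev : 𝟙_ C ⟶ x ⊗ xS) (z : Center C)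
    (ι₁ : x ⟶ z.1) (ι₂ : xS ⟶ z.1) {φ : 𝟙_ C ⟶ z.1 ⊗ z.1}
    (hφ : φ = coev ≫ (ι₁ ⊗ₘ ι₂) - coev ≫ (β_ x xS).hom ≫ (ι₂ ⊗ₘ ι₁)) {n : C} (u : z.1 ⊗ n ⟶ n) :
    relTwo z φ u = copairAct coev ((ι₁ ▷ n) ≫ u) ((ι₂ ▷ n) ≫ u)
      - copairAct (coev ≫ (β_ x xS).hom) ((ι₂ ▷ n) ≫ u) ((ι₁ ▷ n) ≫ u) := by
  rw [← copairAct_comp_tensorHom, ← copairAct_comp_tensorHom, ← copairAct_sub, Category.assoc,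
    ← hφ]
  rfl

theorem relTwo_fus {x xS : C} (coev : 𝟙_ C ⟶ x ⊗ xS) (z : Center C)
    (ι₁ : x ⟶ z.1) (ι₂ : xS ⟶ z.1) {φ : 𝟙_ C ⟶ z.1 ⊗ z.1}
    (hφ : φ = coev ≫ (ι₁ ⊗ₘ ι₂) - coev ≫ (β_ x xS).hom ≫ (ι₂ ⊗ₘ ι₁)) {a : C}
    (hβ₁ : (ι₁ ▷ a) ≫ (z.2.β a).hom = (β_ x a).hom ≫ (a ◁ ι₁))
    (hβ₂ : (ι₂ ▷ a) ≫ (z.2.β a).hom = (β_ a xS).inv ≫ (a ◁ ι₂))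
    {c : k} (hc : (β_ a xS).inv = c • (β_ xS a).hom)
    (f : z.1 ⊗ a ⟶ a) {m : C} (h : z.1 ⊗ m ⟶ m) :
    relTwo z φ (fus z f h) = (α_ (𝟙_ C) a m).inv ≫ (relTwo z φ f ▷ m)
      + c • ((λ_ (a ⊗ m)).hom ≫ (a ◁ (λ_ m).inv) ≫ (a ◁ relTwo z φ h)) := by
  change relTwo z φ (actLeft f m + actRight (z.2.β a).hom h) = _
  rw [relTwo_eq_copairAct_sub coev z ι₁ ι₂ hφ,
    Preadditive.comp_add, Preadditive.comp_add, whiskerRight_comp_actLeft,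
    whiskerRight_comp_actLeft, whiskerRight_comp_actRight ι₁ hβ₁,
    whiskerRight_comp_actRight ι₂ hβ₂, copairAct_add_add, copairAct_add_add,
    copairAct_actRight_actLeft, copairAct_actLeft_actRight, hc, actRight_smul,
    copairAct_smul_inner, copairAct_smul_outer, copairAct_smul_outer, copairAct_actLeft_actLeft,
    copairAct_actLeft_actLeft, copairAct_actRight_actRight, copairAct_actRight_actRight,
    relTwo_eq_copairAct_sub coev z ι₁ ι₂ hφ f, relTwo_eq_copairAct_sub coev z ι₁ ι₂ hφ h,
    sub_whiskerRight, whiskerLeft_sub]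
  simp only [Preadditive.comp_sub]
  module

theorem double_relation_closed_under_fusion_general
    {x xS : C} (ev : xS ⊗ x ⟶ 𝟙_ C) (coev : 𝟙_ C ⟶ x ⊗ xS)
    (zig : (coev ▷ x) ≫ (α_ x xS x).hom ≫ (x ◁ ev) = (λ_ x).hom ≫ (ρ_ x).inv)
    (zag : (xS ◁ coev) ≫ (α_ xS x xS).inv ≫ (ev ▷ xS) = (ρ_ xS).hom ≫ (λ_ xS).inv)
    (Dx : CategoryTheory.Center C)
    (ι₁ : x ⟶ Dx.1) (ι₂ : xS ⟶ Dx.1)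
    (hβ₁ : ∀ m : C, (ι₁ ▷ m) ≫ (Dx.2.β m).hom = (β_ x m).hom ≫ (m ◁ ι₁))
    (hβ₂ : ∀ m : C, (ι₂ ▷ m) ≫ (Dx.2.β m).hom = (β_ m xS).inv ≫ (m ◁ ι₂))
    -- the canonical relation φ
    (φ : 𝟙_ C ⟶ Dx.1 ⊗ Dx.1)
    (hφ : φ = coev ≫ (ι₁ ⊗ₘ ι₂) - coev ≫ (β_ x xS).hom ≫ (ι₂ ⊗ₘ ι₁))
    -- `a` and `b` projectively centralize `x`
    {a b : C} (lamA : k)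
    (hax : (β_ x a).hom ≫ (β_ a x).hom = lamA • 𝟙 (x ⊗ a))
    -- modules `(a, f)` and `(b, g)` satisfying the relation φ
    (f : Dx.1 ⊗ a ⟶ a) (g : Dx.1 ⊗ b ⟶ b)
    (hf : relTwo Dx φ f = 0) (hg : relTwo Dx φ g = 0) :
    relTwo Dx φ (fus Dx f g) = 0 ∧
    (∀ {m : C} (h : Dx.1 ⊗ m ⟶ m), relTwo Dx φ h = 0 →
      relTwo Dx φ (fus Dx f h) = 0) := by
  let _ : ExactPairing x xS := ⟨coev, ev, zag, zig⟩
  have hdual : (β_ a xS).inv = lamA • (β_ xS a).hom :=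
    braiding_inv_eq_smul_braiding_of_exactPairing hax
  have closed : ∀ {m : C} (h : Dx.1 ⊗ m ⟶ m), relTwo Dx φ h = 0 →
      relTwo Dx φ (fus Dx f h) = 0 := by
    intro m h hh
    rw [relTwo_fus coev Dx ι₁ ι₂ hφ (hβ₁ a) (hβ₂ a) hdual, hf, hh]
    simp
  exact ⟨closed g hg, closed⟩

/-- Assume `char k = 0`.  Let `Dx ∈ Z(C)` be the double of an object `x` of the braided
category `C` (with right dual `xS = x^∗`), with canonical relation
`φ = coev ≫ (ι₁ ⊗ₘ ι₂) − coev ≫ c_{x,x^∗} ≫ (ι₂ ⊗ₘ ι₁) : 𝟙_C ⟶ Dx ⊗ Dx`.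
If `a` and `b` projectively centralize `x` and the `Q_{Dx}`-modules `(a, f)`, `(b, g)` satisfy
the relation `φ`, then so does their fusion product `(a ⊗ b, f ⊗̂ g)`.  Moreover, if `a`
projectively centralizes `x` and `(a, f)` satisfies `φ`, then for every `Q_{Dx}`-module
`(m, h)` satisfying `φ` the fusion product `(a ⊗ m, f ⊗̂ h)` satisfies `φ`. -/
theorem double_relation_closed_under_fusion [CharZero k]
    {x xS : C} (ev : xS ⊗ x ⟶ 𝟙_ C) (coev : 𝟙_ C ⟶ x ⊗ xS)
    (zig : (coev ▷ x) ≫ (α_ x xS x).hom ≫ (x ◁ ev) = (λ_ x).hom ≫ (ρ_ x).inv)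
    (zag : (xS ◁ coev) ≫ (α_ xS x xS).inv ≫ (ev ▷ xS) = (ρ_ xS).hom ≫ (λ_ xS).inv)
    (Dx : CategoryTheory.Center C)
    (ι₁ : x ⟶ Dx.1) (ι₂ : xS ⟶ Dx.1) (p₁ : Dx.1 ⟶ x) (p₂ : Dx.1 ⟶ xS)
    (hι₁p₁ : ι₁ ≫ p₁ = 𝟙 x) (hι₂p₂ : ι₂ ≫ p₂ = 𝟙 xS)
    (hι₁p₂ : ι₁ ≫ p₂ = 0) (hι₂p₁ : ι₂ ≫ p₁ = 0)
    (htotal : p₁ ≫ ι₁ + p₂ ≫ ι₂ = 𝟙 Dx.1)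
    (hβ₁ : ∀ m : C, (ι₁ ▷ m) ≫ (Dx.2.β m).hom = (β_ x m).hom ≫ (m ◁ ι₁))
    (hβ₂ : ∀ m : C, (ι₂ ▷ m) ≫ (Dx.2.β m).hom = (β_ m xS).inv ≫ (m ◁ ι₂))
    -- the canonical relation φ
    (φ : 𝟙_ C ⟶ Dx.1 ⊗ Dx.1)
    (hφ : φ = coev ≫ (ι₁ ⊗ₘ ι₂) - coev ≫ (β_ x xS).hom ≫ (ι₂ ⊗ₘ ι₁))
    -- `a` and `b` projectively centralize `x`
    {a b : C} (lamA lamB : k) (hlamA : lamA ≠ 0) (hlamB : lamB ≠ 0)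
    (hax : (β_ x a).hom ≫ (β_ a x).hom = lamA • 𝟙 (x ⊗ a))
    (hbx : (β_ x b).hom ≫ (β_ b x).hom = lamB • 𝟙 (x ⊗ b))
    -- modules `(a, f)` and `(b, g)` satisfying the relation φ
    (f : Dx.1 ⊗ a ⟶ a) (g : Dx.1 ⊗ b ⟶ b)
    (hf : relTwo Dx φ f = 0) (hg : relTwo Dx φ g = 0) :
    relTwo Dx φ (fus Dx f g) = 0 ∧
    (∀ {m : C} (h : Dx.1 ⊗ m ⟶ m), relTwo Dx φ h = 0 →
      relTwo Dx φ (fus Dx f h) = 0) :=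
  double_relation_closed_under_fusion_general ev coev zig zag Dx ι₁ ι₂ hβ₁ hβ₂ φ hφ lamA hax f g hf
    hg
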